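/- Let A be a p×K real matrix with nonnegative entries such that every row a_i of A is nonzero, and let V be a nonsingular K×K real matrix with columns V_1, …, V_K such that V_1 has all positive entries. Set Ξ = A·V with first column ξ_1 (which has all positive entries), define r_i ∈ ℝ^{K−1} by r_i(k) = ξ_{k+1}(i)/ξ_1(i), and define v_j* ∈ ℝ^{K−1} by v_j*(k) = V_{k+1}(j)/V_1(j). Then for every 1 ≤ i ≤ p and 1 ≤ k ≤ K: r_i = v_k* if and only if a_i(j) = 0 for all j ≠ k, i.e., if and only if word i is an anchor word of topic k. -/

import Mathlib

open Matrix BigOperators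

/-!
The rows of `Ξ = A V` are the rows of `V` mixed with the nonnegative weights `a_i`, and
`r_i`, `v_j*` are these vectors read in the affine chart `x₀ ≠ 0` (the first coordinate is
positive by the sign assumptions). Two vectors with nonzero first coordinate have the same
affine image iff they are proportional, so `r_i = v_k*` means `a_iᵀ V = c · V_k = (c e_k)ᵀ V`
for some `c`; as `V` is invertible this says `a_i = c e_k`, i.e. `a_i` is supported on `{k}`.
-/

section Dehomogenize

variable {R : Type*} {K : ℕ}

def dehomogenize [Div R] (x : Fin (K + 1) → R) : Fin K → R :=
  fun k => x k.succ / x 0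

variable [Field R]

theorem dehomogenize_smul (x : Fin (K + 1) → R) {c : R} (hc : c ≠ 0) :
    dehomogenize (c • x) = dehomogenize x := by
  funext k
  simp only [dehomogenize, Pi.smul_apply, smul_eq_mul, mul_div_mul_left _ _ hc]

theorem eq_smul_of_dehomogenize_eq {x y : Fin (K + 1) → R} (hx : x 0 ≠ 0) (hy : y 0 ≠ 0)
    (h : dehomogenize x = dehomogenize y) : x = (x 0 / y 0) • y := by
  funext m
  simp only [Pi.smul_apply, smul_eq_mul]
  induction m using Fin.cases with
  | zero => exact (div_mul_cancel₀ _ hy).symm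
  | succ k =>
    have hk : x k.succ / x 0 = y k.succ / y 0 := congrFun h k
    rw [div_mul_comm, ← hk, div_mul_cancel₀ _ hx]

theorem dehomogenize_eq_iff {x y : Fin (K + 1) → R} (hx : x 0 ≠ 0) (hy : y 0 ≠ 0) :
    dehomogenize x = dehomogenize y ↔ ∃ c : R, x = c • y := by
  refine ⟨fun h => ⟨_, eq_smul_of_dehomogenize_eq hx hy h⟩, ?_⟩
  rintro ⟨c, rfl⟩
  exact dehomogenize_smul y (left_ne_zero_of_mul hx)

end Dehomogenize

theorem dotProduct_pos_of_nonneg_of_ne_zero {ι R : Type*} [Fintype ι] [Semiring R]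
    [PartialOrder R] [IsStrictOrderedRing R] {a v : ι → R} (ha : 0 ≤ a) (ha0 : a ≠ 0)
    (hv : ∀ j, 0 < v j) : 0 < a ⬝ᵥ v := by
  obtain ⟨j, hj⟩ := Function.ne_iff.mp ha0
  exact Finset.sum_pos' (fun i _ => mul_nonneg (ha i) (hv i).le)
    ⟨j, Finset.mem_univ j, mul_pos ((ha j).lt_of_ne' hj) (hv j)⟩

theorem exists_eq_pi_single_iff {ι M : Type*} [DecidableEq ι] [Zero M] (a : ι → M) (k : ι) :
    (∃ c, a = Pi.single k c) ↔ ∀ j, j ≠ k → a j = 0 := by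
  constructor
  · rintro ⟨c, rfl⟩ j hj
    simp [hj]
  · intro h
    refine ⟨a k, funext fun j => ?_⟩
    by_cases hj : j = k
    · subst hj; simp
    · rw [h j hj, Pi.single_eq_of_ne hj]

theorem exists_vecMul_eq_smul_row_iff {n R : Type*} [Fintype n] [DecidableEq n] [CommRing R]
    {V : Matrix n n R} (hV : IsUnit V) (a : n → R) (k : n) :
    (∃ c : R, a ᵥ* V = c • V k) ↔ ∃ c, a = Pi.single k c := by
  simp_rw [← row_apply' V k, ← single_vecMul, (vecMul_injective_of_isUnit hV).eq_iff]

/-- anchor-word characterization of Lemma 2: the row r_i of the ratio matrix R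
coincides with the vertex v_k* of the simplex if and only if word i is an anchor word of
topic k, i.e. a_i(j) = 0 for all j ≠ k.
(The number of topics is written K+1 so that the first column always exists.) -/
theorem row_eq_vertex_iff_anchor_word
    (p K : ℕ) (A : Matrix (Fin p) (Fin (K + 1)) ℝ)
    (hA : ∀ i j, 0 ≤ A i j) (hrow : ∀ i, A i ≠ 0)
    (V : Matrix (Fin (K + 1)) (Fin (K + 1)) ℝ)
    (hV : IsUnit V.det) (hV1 : ∀ j, 0 < V j 0)
    (Ξ : Matrix (Fin p) (Fin (K + 1)) ℝ) (hΞ : Ξ = A * V)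
    (r : Fin p → Fin K → ℝ) (hr : ∀ i k, r i k = Ξ i k.succ / Ξ i 0)
    (vstar : Fin (K + 1) → Fin K → ℝ)
    (hvs : ∀ j k, vstar j k = V j k.succ / V j 0) :
    ∀ (i : Fin p) (k : Fin (K + 1)), r i = vstar k ↔ ∀ j, j ≠ k → A i j = 0 := by
  subst hΞ
  intro i k
  have hri : r i = dehomogenize ((A * V) i) := funext (hr i)
  have hvk : vstar k = dehomogenize (V k) := funext (hvs k)
  have hΞi0 : (A * V) i 0 ≠ 0 := by
    rw [mul_apply']
    exact (dotProduct_pos_of_nonneg_of_ne_zero (hA i) (hrow i) hV1).ne'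
  rw [hri, hvk, dehomogenize_eq_iff hΞi0 (hV1 k).ne', mul_apply_eq_vecMul,
    exists_vecMul_eq_smul_row_iff ((isUnit_iff_isUnit_det V).mpr hV), exists_eq_pi_single_iff]
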